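/- Let k ∈ ℝ and b ∈ ℂ with b ≠ 0, and define β(x,t) = |b|²/(1 + |b|²(x - 2kt)) on Ω = {(x,t) : 1 + |b|²(x - 2kt) ≠ 0}. Then β satisfies the canonical PDE ∂²β/∂t² = ∂/∂x[ -(1/2)(β')² - (1/4)β''' + ((β_t)² + (1/4)(β'')²)/β' ] at every point of Ω where β' ≠ 0. -/

import Mathlib

/-!
β is a travelling wave β(x,t) = g(x - 2kt) with g(ξ) = c/(1 + cξ), c = |b|², so
β_t = -2kβ' and β_tt = 4k²β''. For this g the expression -(1/2)g'² - (1/4)g''' + (1/4)g''²/g'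
vanishes identically (its three terms are c⁴/(1 + cξ)⁴ times -1/2, 3/2 and -1), so the bracket of
the PDE reduces to (β_t)²/β' = 4k²β', whose x-derivative is 4k²β'' = β_tt.
-/

noncomputable section

/-- One-dimensional rational soliton. -/
def beta (k : ℝ) (b : ℂ) (x t : ℝ) : ℝ :=
  ‖b‖ ^ 2 / (1 + ‖b‖ ^ 2 * (x - 2 * k * t))

def bx (k : ℝ) (b : ℂ) (x t : ℝ) : ℝ := deriv (fun y => beta k b y t) x
def bxx (k : ℝ) (b : ℂ) (x t : ℝ) : ℝ := deriv (fun y => bx k b y t) x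
def bxxx (k : ℝ) (b : ℂ) (x t : ℝ) : ℝ := deriv (fun y => bxx k b y t) x
def bt (k : ℝ) (b : ℂ) (x t : ℝ) : ℝ := deriv (fun s => beta k b x s) t
def btt (k : ℝ) (b : ℂ) (x t : ℝ) : ℝ := deriv (fun s => bt k b x s) t

open Filter Topology

theorem HasDerivAt.const_div_pow {f : ℝ → ℝ} {f' x : ℝ} (a : ℝ) (n : ℕ)
    (hf : HasDerivAt f f' x) (hx : f x ≠ 0) :
    HasDerivAt (fun y => a / f y ^ n) (-(n * a * f') / f x ^ (n + 1)) x := by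
  refine ((hasDerivAt_const x a).fun_div (hf.fun_pow n) (pow_ne_zero n hx)).congr_deriv ?_
  rcases n with _ | m
  · simp
  · rw [Nat.add_sub_cancel]
    field_simp
    ring

theorem deriv_eq_of_eventuallyEq_const_div_pow {f g : ℝ → ℝ} {g' x : ℝ} (a : ℝ) (n : ℕ)
    (hg : HasDerivAt g g' x) (hx : g x ≠ 0) (hf : f =ᶠ[𝓝 x] fun y => a / g y ^ n) :
    deriv f x = -(n * a * g') / g x ^ (n + 1) :=
  ((hg.const_div_pow a n hx).congr_of_eventuallyEq hf).deriv

namespace Soliton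

variable {k : ℝ} {b : ℂ} {x t : ℝ}

theorem hasDerivAt_denom_x (c : ℝ) :
    HasDerivAt (fun y => 1 + c * (y - 2 * k * t)) c x := by
  refine ((((hasDerivAt_id' x).sub_const (2 * k * t)).const_mul c).const_add 1).congr_deriv ?_
  ring

theorem hasDerivAt_denom_t (c : ℝ) :
    HasDerivAt (fun s => 1 + c * (x - 2 * k * s)) (-(2 * k * c)) t := by
  refine ((((hasDerivAt_id' t).const_mul (2 * k)).const_sub x).const_mul c).const_add 1
    |>.congr_deriv ?_
  ring

theorem eventually_denom_ne_x {c : ℝ} (h : 1 + c * (x - 2 * k * t) ≠ 0) :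
    ∀ᶠ y in 𝓝 x, 1 + c * (y - 2 * k * t) ≠ 0 :=
  (hasDerivAt_denom_x c).continuousAt.eventually_ne h

theorem eventually_denom_ne_t {c : ℝ} (h : 1 + c * (x - 2 * k * t) ≠ 0) :
    ∀ᶠ s in 𝓝 t, 1 + c * (x - 2 * k * s) ≠ 0 :=
  (hasDerivAt_denom_t c).continuousAt.eventually_ne h

theorem bx_eq (h : 1 + ‖b‖ ^ 2 * (x - 2 * k * t) ≠ 0) :
    bx k b x t = -(‖b‖ ^ 2) ^ 2 / (1 + ‖b‖ ^ 2 * (x - 2 * k * t)) ^ 2 := by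
  rw [bx, deriv_eq_of_eventuallyEq_const_div_pow (‖b‖ ^ 2) 1 (hasDerivAt_denom_x _) h
    (.of_forall fun y => by simp only [beta, pow_one])]
  push_cast
  ring

theorem bt_eq (h : 1 + ‖b‖ ^ 2 * (x - 2 * k * t) ≠ 0) :
    bt k b x t = 2 * k * (‖b‖ ^ 2) ^ 2 / (1 + ‖b‖ ^ 2 * (x - 2 * k * t)) ^ 2 := by
  rw [bt, deriv_eq_of_eventuallyEq_const_div_pow (‖b‖ ^ 2) 1 (hasDerivAt_denom_t _) h
    (.of_forall fun s => by simp only [beta, pow_one])]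
  push_cast
  ring

theorem bxx_eq (h : 1 + ‖b‖ ^ 2 * (x - 2 * k * t) ≠ 0) :
    bxx k b x t = 2 * (‖b‖ ^ 2) ^ 3 / (1 + ‖b‖ ^ 2 * (x - 2 * k * t)) ^ 3 := by
  rw [bxx, deriv_eq_of_eventuallyEq_const_div_pow _ 2 (hasDerivAt_denom_x _) h
    ((eventually_denom_ne_x h).mono fun y hy => bx_eq hy)]
  push_cast
  ring

theorem bxxx_eq (h : 1 + ‖b‖ ^ 2 * (x - 2 * k * t) ≠ 0) :
    bxxx k b x t = -6 * (‖b‖ ^ 2) ^ 4 / (1 + ‖b‖ ^ 2 * (x - 2 * k * t)) ^ 4 := by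
  rw [bxxx, deriv_eq_of_eventuallyEq_const_div_pow _ 3 (hasDerivAt_denom_x _) h
    ((eventually_denom_ne_x h).mono fun y hy => bxx_eq hy)]
  push_cast
  ring

theorem btt_eq (h : 1 + ‖b‖ ^ 2 * (x - 2 * k * t) ≠ 0) :
    btt k b x t = 8 * k ^ 2 * (‖b‖ ^ 2) ^ 3 / (1 + ‖b‖ ^ 2 * (x - 2 * k * t)) ^ 3 := by
  rw [btt, deriv_eq_of_eventuallyEq_const_div_pow _ 2 (hasDerivAt_denom_t _) h
    ((eventually_denom_ne_t h).mono fun s hs => bt_eq hs)]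
  push_cast
  ring

theorem bracket_eq (h : 1 + ‖b‖ ^ 2 * (x - 2 * k * t) ≠ 0) :
    -(1 / 2) * (bx k b x t) ^ 2 - (1 / 4) * bxxx k b x t +
        ((bt k b x t) ^ 2 + (1 / 4) * (bxx k b x t) ^ 2) / bx k b x t =
      -(4 * k ^ 2 * (‖b‖ ^ 2) ^ 2) / (1 + ‖b‖ ^ 2 * (x - 2 * k * t)) ^ 2 := by
  rw [bx_eq h, bxx_eq h, bxxx_eq h, bt_eq h]
  generalize 1 + ‖b‖ ^ 2 * (x - 2 * k * t) = D at h ⊢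
  generalize ‖b‖ ^ 2 = c
  -- for c = 0 both sides vanish, the quotient by β' = 0 through the convention _ / 0 = 0
  rcases eq_or_ne c 0 with rfl | hc
  · simp
  · field_simp
    ring

end Soliton

open Soliton in
theorem stmt_15_general (k : ℝ) (b : ℂ) (x t : ℝ)
    (hΩ : 1 + ‖b‖ ^ 2 * (x - 2 * k * t) ≠ 0) :
    btt k b x t =
      deriv (fun y => -(1 / 2) * (bx k b y t) ^ 2 - (1 / 4) * bxxx k b y t +
        ((bt k b y t) ^ 2 + (1 / 4) * (bxx k b y t) ^ 2) / bx k b y t) x := by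
  rw [btt_eq hΩ, deriv_eq_of_eventuallyEq_const_div_pow _ 2 (hasDerivAt_denom_x _) hΩ
    ((eventually_denom_ne_x hΩ).mono fun y hy => bracket_eq hy)]
  push_cast
  field_simp
  ring

/-- β(x,t) = |b|²/(1+|b|²(x-2kt)) satisfies the canonical PDE
    ∂²β/∂t² = ∂/∂x[-(1/2)(β')² - (1/4)β''' + ((β_t)² + (1/4)(β'')²)/β']. -/
theorem stmt_15 (k : ℝ) (b : ℂ) (hb : b ≠ 0) (x t : ℝ)
    (hΩ : 1 + ‖b‖ ^ 2 * (x - 2 * k * t) ≠ 0)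
    (hbx : bx k b x t ≠ 0) :
    btt k b x t =
      deriv (fun y => -(1 / 2) * (bx k b y t) ^ 2 - (1 / 4) * bxxx k b y t +
        ((bt k b y t) ^ 2 + (1 / 4) * (bxx k b y t) ^ 2) / bx k b y t) x :=
  stmt_15_general k b x t hΩ

end
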